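/- arXiv:2402.01341 — 2 statements merged into one kernel-verified Lean document; each statement's English description precedes it below -/
import Mathlib

section
/- Causal entropy can exceed the initial entropy: there exist probability distributions p and q on Bool and a kernel κ : Bool → Bool → ℝ with κ x a probability distribution on Bool for every x, such that Hc(q, κ) > H(fun y => ∑ x, p x * κ x y). (Here p plays the role of the observational distribution of X in an unconfounded model, so that fun y => ∑ x, p x * κ x y is the observational distribution of Y, and q is the intervention protocol.) -/
/-- A probability distribution on a finite type. -/
def IsProbDist {A : Type*} [Fintype A] (p : A → ℝ) : Prop :=
  (∀ a, 0 ≤ p a) ∧ ∑ a, p a = 1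

/-- Shannon entropy of a distribution on a finite type. -/
noncomputable def entropy {A : Type*} [Fintype A] (p : A → ℝ) : ℝ :=
  ∑ a, Real.negMulLog (p a)

/-- Causal entropy can exceed the initial entropy: there are an observational
distribution `p` of `X`, an intervention protocol `q`, and a kernel `κ` of
post-atomic-intervention distributions such that
`Hc(q, κ) > H(observational distribution of Y)`. -/
theorem causal_entropy_can_exceed_entropy :
    ∃ (p q : Bool → ℝ) (κ : Bool → Bool → ℝ),
      IsProbDist p ∧ IsProbDist q ∧ (∀ x, IsProbDist (κ x)) ∧
      (∑ x, q x * entropy (κ x)) > entropy (fun y => ∑ x, p x * κ x y) := by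
  refine ⟨fun x => if x then 0 else 1, fun x => if x then 1 else 0,
    fun x => if x then (fun _ => 1/2) else (fun y => if y then 0 else 1),
    ⟨fun a => by cases a <;> norm_num, by simp⟩,
    ⟨fun a => by cases a <;> norm_num, by simp⟩,
    fun x => ⟨fun a => by cases x <;> cases a <;> norm_num, by cases x <;> simp⟩, ?_⟩
  simp only [entropy, Fintype.sum_bool]
  norm_num [Real.negMulLog_zero, Real.negMulLog_one, Real.negMulLog]
  have h : Real.log (1/2) = -Real.log 2 := by
    rw [one_div, Real.log_inv]
  have := Real.log_pos (by norm_num : (1:ℝ) < 2)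
  rw [h]; nlinarith
end

section
/- Causal information gain can be negative: there exist probability distributions p and q on Bool and a kernel κ : Bool → Bool → ℝ with κ x a probability distribution on Bool for every x, such that H(fun y => ∑ x, p x * κ x y) - Hc(q, κ) < 0. (Here fun y => ∑ x, p x * κ x y is the observational distribution of Y in an unconfounded model with observational distribution p of X, so the left-hand side is the causal information gain Ic(Y | do(X ∼ X')) = H(Y) - Hc(Y | do(X ∼ X')).) -/
/-- Causal information gain can be negative: there are an observational
distribution `p` of `X`, a protocol `q`, and a kernel `κ` such that
`Ic(Y | do(X ∼ X')) = H(Y) - Hc(q, κ) < 0`, where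
`fun y => ∑ x, p x * κ x y` is the observational distribution of `Y`. -/
theorem causal_information_gain_can_be_negative :
    ∃ (p q : Bool → ℝ) (κ : Bool → Bool → ℝ),
      IsProbDist p ∧ IsProbDist q ∧ (∀ x, IsProbDist (κ x)) ∧
      entropy (fun y => ∑ x, p x * κ x y) - (∑ x, q x * entropy (κ x)) < 0 := by
  refine ⟨fun x => if x then 1 else 0, fun x => if x then 0 else 1,
    fun x y => if x then (if y then 1 else 0) else 1/2, ?_, ?_, ?_, ?_⟩
  · exact ⟨fun a => by cases a <;> norm_num, by simp [Fintype.sum_bool]⟩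
  · exact ⟨fun a => by cases a <;> norm_num, by simp [Fintype.sum_bool]⟩
  · intro x
    cases x
    · exact ⟨fun a => by norm_num, by norm_num [Fintype.sum_bool]⟩
    · exact ⟨fun a => by cases a <;> norm_num, by simp [Fintype.sum_bool]⟩
  · have h2 : Real.negMulLog (1/2) = (1/2) * Real.log 2 := by
      rw [Real.negMulLog, one_div, Real.log_inv]; ring
    simp only [entropy, Fintype.sum_bool]
    simp only [if_true, if_false, Bool.cond_eq_ite]
    norm_num
    rw [h2]
    have := Real.log_pos (by norm_num : (1:ℝ) < 2)
    simp [Real.negMulLog_zero, Real.negMulLog_one]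
    linarith
end
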